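/- arXiv:2605.19129 — 2 statements merged into one kernel-verified Lean document; each statement's English description precedes it below -/
import Mathlib

section
/- For every player i of a finite normal-form game Γ, the pure coarse-correlated performance function P ↦ π_i^{cc,p}(P) is upper semicontinuous on the probability simplex Δ(A). -/
open Finset

variable {I : Type*} [Fintype I] [DecidableEq I] [Nonempty I]
variable {A : I → Type*} [∀ i, Fintype (A i)] [∀ i, DecidableEq (A i)]
  [∀ i, Nonempty (A i)]

/-- The ex ante pure gain of player `j` from the constant deviation to `b`:
`H_j(P; b) = Σ_a P(a) · [u_j(b, a_{-j}) − u_j(a_j, a_{-j})]`. -/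
noncomputable def Hgain (u : I → (∀ i, A i) → ℝ) (P : (∀ i, A i) → ℝ)
    (j : I) (b : A j) : ℝ :=
  ∑ a : ∀ i, A i, P a * (u j (Function.update a j b) - u j a)

/-- `γ` is an admissible profile of rules for the opponents of player `i`:
each `γ j` lies in `C_j^p(P) = {ι_j} ∪ {κ_j^{b_j} : H_j(P; b_j) > 0}`, i.e. it is
either obedience or a constant rule with strictly positive ex ante gain. -/
def CAdmissible (u : I → (∀ i, A i) → ℝ) (P : (∀ i, A i) → ℝ) (i : I)
    (γ : ∀ j, A j → A j) : Prop :=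
  ∀ j, j ≠ i →
    (γ j = id ∨ ∃ b : A j, 0 < Hgain u P j b ∧ γ j = fun _ => b)

/-- The action profile `(a_i, γ_{-i}(a_{-i}))`. -/
def applyDev (i : I) (γ : ∀ j, A j → A j) (a : ∀ j, A j) : ∀ j, A j :=
  fun j => if j = i then a j else γ j (a j)

/-- Pure coarse-correlated optimin performance of player `i`:
`π_i^{cc,p}(P) = min_{γ_{-i} ∈ C_{-i}^p(P)} Σ_a P(a) u_i(a_i, γ_{-i}(a_{-i}))`. -/
noncomputable def ccperf (u : I → (∀ i, A i) → ℝ) (P : (∀ i, A i) → ℝ) (i : I) : ℝ :=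
  sInf {x | ∃ γ : ∀ j, A j → A j, CAdmissible u P i γ ∧
    x = ∑ a : ∀ j, A j, P a * u i (applyDev i γ a)}

/-- for every player `i`, the pure coarse-correlated performance
`P ↦ π_i^{cc,p}(P)` is upper semicontinuous on the probability simplex `Δ(A)`. -/
theorem ccperf_upperSemicontinuousOn
    (u : I → (∀ i, A i) → ℝ) (i : I) :
    UpperSemicontinuousOn (fun P : (∀ i, A i) → ℝ => ccperf u P i)
      (stdSimplex ℝ (∀ i, A i)) := by
  intro P hP y hy
  have hbdd : ∀ Q : (∀ i, A i) → ℝ, BddBelow {x | ∃ γ : ∀ j, A j → A j,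
      CAdmissible u Q i γ ∧ x = ∑ a : ∀ j, A j, Q a * u i (applyDev i γ a)} := by
    intro Q
    apply Set.Finite.bddBelow
    apply Set.Finite.subset (Set.finite_range
      (fun γ : ∀ j, A j → A j => ∑ a : ∀ j, A j, Q a * u i (applyDev i γ a)))
    rintro x ⟨γ, _, rfl⟩
    exact ⟨γ, rfl⟩
  have hne : Set.Nonempty {x | ∃ γ : ∀ j, A j → A j,
      CAdmissible u P i γ ∧ x = ∑ a : ∀ j, A j, P a * u i (applyDev i γ a)} :=
    ⟨_, fun _ => id, fun j _ => Or.inl rfl, rfl⟩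
  obtain ⟨x, ⟨γ, hγ, rfl⟩, hxy⟩ := (csInf_lt_iff (hbdd P) hne).mp hy
  have hcont : Continuous (fun Q : (∀ i, A i) → ℝ =>
      ∑ a : ∀ j, A j, Q a * u i (applyDev i γ a)) := by
    apply continuous_finset_sum
    intro a _
    exact (continuous_apply a).mul continuous_const
  have h1 : ∀ᶠ Q in nhdsWithin P (stdSimplex ℝ (∀ i, A i)),
      (∑ a : ∀ j, A j, Q a * u i (applyDev i γ a)) < y := by
    apply Filter.Eventually.filter_mono nhdsWithin_le_nhds
    exact (isOpen_lt hcont continuous_const).eventually_mem hxy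
  have h2 : ∀ᶠ Q in nhdsWithin P (stdSimplex ℝ (∀ i, A i)), CAdmissible u Q i γ := by
    unfold CAdmissible
    rw [Filter.eventually_all]
    intro j
    by_cases hj : j = i
    · filter_upwards with Q hji
      exact absurd hj hji
    · rcases hγ j hj with h | ⟨b, hb, hgb⟩
      · filter_upwards with Q _
        exact Or.inl h
      · have hHcont : Continuous (fun Q : (∀ i, A i) → ℝ => Hgain u Q j b) := by
          apply continuous_finset_sum
          intro a _
          exact (continuous_apply a).mul continuous_const
        have : ∀ᶠ Q in nhdsWithin P (stdSimplex ℝ (∀ i, A i)), 0 < Hgain u Q j b := by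
          apply Filter.Eventually.filter_mono nhdsWithin_le_nhds
          exact (isOpen_lt continuous_const hHcont).eventually_mem hb
        filter_upwards [this] with Q hQ _
        exact Or.inr ⟨b, hQ, hgb⟩
  filter_upwards [h1, h2] with Q hQ1 hQ2
  calc ccperf u Q i ≤ ∑ a : ∀ j, A j, Q a * u i (applyDev i γ a) :=
        csInf_le (hbdd Q) ⟨γ, hQ2, rfl⟩
    _ < y := hQ1
end

section
/- Every finite normal-form game has at least one pure coarse-correlated optimin: there exists P̄ ∈ Δ(A) such that no Q ∈ Δ(A) satisfies π_i^{cc,p}(Q) ≥ π_i^{cc,p}(P̄) for every player i with strict inequality for at least one player. -/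
open Finset

variable {I : Type*} [Fintype I] [DecidableEq I] [Nonempty I]
variable {A : I → Type*} [∀ i, Fintype (A i)] [∀ i, DecidableEq (A i)]
  [∀ i, Nonempty (A i)]

/-!
Each `ccperf u · i` is upper semicontinuous on the simplex: it is a minimum of finitely many
linear payoffs, and the rule attaining it at `P₀` remains admissible near `P₀`, because
admissibility only asks for strict inequalities between continuous gains. Hence the sum
of the performances attains its maximum on the compact simplex, and a maximizer of the
sum cannot be Pareto dominated.
-/

open Filter Topology

theorem not_exists_pareto_improvement_of_isMaxOn_sum {X ι β : Type*} [Fintype ι]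
    [AddCommMonoid β] [PartialOrder β] [IsOrderedCancelAddMonoid β]
    {f : ι → X → β} {s : Set X} {x : X} (hx : IsMaxOn (fun y => ∑ i, f i y) s x) :
    ¬ ∃ y ∈ s, (∀ i, f i x ≤ f i y) ∧ ∃ i, f i x < f i y := by
  rintro ⟨y, hy, hle, i, hlt⟩
  exact (hx hy).not_gt (sum_lt_sum (fun i _ => hle i) ⟨i, mem_univ i, hlt⟩)

section
omit [Nonempty I] [∀ i, DecidableEq (A i)] [∀ i, Nonempty (A i)]

variable (u : I → (∀ i, A i) → ℝ)

noncomputable def devPayoff (i : I) (γ : ∀ j, A j → A j) (P : (∀ i, A i) → ℝ) : ℝ :=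
  ∑ a : ∀ j, A j, P a * u i (applyDev i γ a)

theorem continuous_devPayoff (i : I) (γ : ∀ j, A j → A j) : Continuous (devPayoff u i γ) :=
  continuous_finsetSum _ fun a _ => (continuous_apply a).mul continuous_const

theorem continuous_Hgain (j : I) (b : A j) : Continuous fun P => Hgain u P j b :=
  continuous_finsetSum _ fun a _ => (continuous_apply a).mul continuous_const

theorem ccperf_eq_sInf_image (P : (∀ i, A i) → ℝ) (i : I) :
    ccperf u P i = sInf ((devPayoff u i · P) '' {γ | CAdmissible u P i γ}) := by
  simp only [ccperf, devPayoff, Set.image, Set.mem_ofPred_eq, eq_comm]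

variable {u}

theorem ccperf_le_devPayoff {P : (∀ i, A i) → ℝ} {i : I} {γ : ∀ j, A j → A j}
    (hγ : CAdmissible u P i γ) : ccperf u P i ≤ devPayoff u i γ P := by
  rw [ccperf_eq_sInf_image]
  exact csInf_le (Set.toFinite _).bddBelow (Set.mem_image_of_mem _ hγ)

theorem exists_ccperf_eq_devPayoff (P : (∀ i, A i) → ℝ) (i : I) :
    ∃ γ, CAdmissible u P i γ ∧ ccperf u P i = devPayoff u i γ P := by
  have hobey : (fun _ => id) ∈ {γ | CAdmissible u P i γ} := fun _ _ => Or.inl rfl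
  obtain ⟨γ, hγ, hmin⟩ := 
    (Set.nonempty_of_mem hobey |>.image (devPayoff u i · P)).csInf_mem (Set.toFinite _)
  exact ⟨γ, hγ, (ccperf_eq_sInf_image u P i).trans hmin.symm⟩

theorem CAdmissible.eventually {P₀ : (∀ i, A i) → ℝ} {i : I} {γ : ∀ j, A j → A j}
    (hγ : CAdmissible u P₀ i γ) : ∀ᶠ P in 𝓝 P₀, CAdmissible u P i γ := by
  have hgain : ∀ᶠ P in 𝓝 P₀, ∀ j (b : A j), 0 < Hgain u P₀ j b → 0 < Hgain u P j b := by
    simp only [eventually_all]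
    exact fun j b h => (continuous_Hgain u j b).continuousAt.eventually_const_lt h
  filter_upwards [hgain] with P hP j hj
  exact (hγ j hj).imp_right fun ⟨b, hb, hγb⟩ => ⟨b, hP j b hb, hγb⟩

variable (u)

theorem upperSemicontinuous_ccperf (i : I) : UpperSemicontinuous fun P => ccperf u P i := by
  intro P₀ y hy
  obtain ⟨γ, hγ, hmin⟩ := exists_ccperf_eq_devPayoff P₀ i
  have hpay : ∀ᶠ P in 𝓝 P₀, devPayoff u i γ P < y :=
    (continuous_devPayoff u i γ).continuousAt.eventually_lt continuousAt_const (hmin ▸ hy)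
  filter_upwards [hγ.eventually, hpay] with P hadm hP
  exact (ccperf_le_devPayoff hadm).trans_lt hP

end

/-- every finite game has a pure coarse-correlated optimin, i.e. a
distribution `P̄ ∈ Δ(A)` that is Pareto undominated with respect to
`(π_1^{cc,p}, …, π_n^{cc,p})`. -/
theorem exists_pure_coarse_correlated_optimin (u : I → (∀ i, A i) → ℝ) :
    ∃ Pbar ∈ stdSimplex ℝ (∀ i, A i),
      ¬ ∃ Q ∈ stdSimplex ℝ (∀ i, A i),
        (∀ i : I, ccperf u Pbar i ≤ ccperf u Q i) ∧
        (∃ i : I, ccperf u Pbar i < ccperf u Q i) := by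
  have husc : UpperSemicontinuous fun P => ∑ i, ccperf u P i :=
    upperSemicontinuous_sum fun i _ => upperSemicontinuous_ccperf u i
  obtain ⟨Pbar, hPbar, hmax⟩ := (husc.upperSemicontinuousOn _).exists_isMaxOn
    ⟨_, ite_eq_mem_stdSimplex ℝ (Classical.arbitrary _)⟩ (isCompact_stdSimplex ℝ _)
  exact ⟨Pbar, hPbar, not_exists_pareto_improvement_of_isMaxOn_sum hmax⟩
end
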